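/- arXiv:1001.0289 — 2 statements merged into one kernel-verified Lean document; each statement's English description precedes it below -/
import Mathlib

section
/- For every x ∈ X with I(x) = {i_1 < … < i_s} and every g₀ ∈ (ℤ/2)^m, the stabilizer of the point [(x, g₀)] under the natural (ℤ/2)^m-action on M(X, λ) equals the set { ε_1·λ(i_1) + ⋯ + ε_s·λ(i_s) : ε ∈ {0,1}^s and τ_{i_s}^{ε_s}(⋯(τ_{i_1}^{ε_1}(x))⋯) = x }. -/
open Set Relation

/-- An involutive panel structure on a topological space `X` with `k` panels. -/
structure PanelStructure (X : Type*) [TopologicalSpace X] (k : ℕ) where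
  P : Fin k → Set X
  isClosed : ∀ i, IsClosed (P i)
  τ : Fin k → X → X
  continuousOn : ∀ i, ContinuousOn (τ i) (P i)
  mapsTo : ∀ i, Set.MapsTo (τ i) (P i) (P i)
  invol : ∀ i, ∀ x ∈ P i, τ i (τ i x) = x
  interMapsTo : ∀ i j, Set.MapsTo (τ i) (P i ∩ P j) (P i ∩ P j)
  comm : ∀ i j, ∀ x ∈ P i ∩ P j, τ i (τ j x) = τ j (τ i x)

/-- The additive group `(ℤ/2)^m`, with the discrete topology. -/
abbrev Z2 (m : ℕ) : Type := Fin m → ZMod 2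

instance (m : ℕ) : TopologicalSpace (Z2 m) := ⊥
instance (m : ℕ) : DiscreteTopology (Z2 m) := ⟨rfl⟩

variable {X : Type*} [TopologicalSpace X] {k m : ℕ}

/-- The basic gluing relation `(x, g) ∼ (τᵢ x, g + λ i)` for `x ∈ Pᵢ`. -/
def glueRel (S : PanelStructure X k) {G : Type*} [AddGroup G] (lam : Fin k → G)
    (p q : X × G) : Prop :=
  ∃ i, p.1 ∈ S.P i ∧ q.1 = S.τ i p.1 ∧ q.2 = p.2 + lam i

/-- The equivalence relation generated by the gluing relation. -/
def glueSetoid (S : PanelStructure X k) {G : Type*} [AddGroup G] (lam : Fin k → G) :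
    Setoid (X × G) :=
  EqvGen.setoid (glueRel S lam)

/-- The glue-back construction `M(X, λ)`, as a quotient of `X × G`
(with `G` carrying its own topology, discrete in the case `G = Z2 m`). -/
abbrev GlueBack (S : PanelStructure X k) {G : Type*} [AddGroup G] (lam : Fin k → G) :
    Type _ :=
  Quotient (glueSetoid S lam)

/-- The class `[(x, g)]` in the glue-back construction. -/
abbrev glueMk (S : PanelStructure X k) {G : Type*} [AddGroup G] (lam : Fin k → G)
    (x : X) (g : G) : GlueBack S lam :=
  Quotient.mk (glueSetoid S lam) (x, g)

theorem eqvGen_map_of_map {α : Type*} {r : α → α → Prop} (f : α → α)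
    (hf : ∀ a b, r a b → r (f a) (f b)) :
    ∀ {a b : α}, EqvGen r a b → EqvGen r (f a) (f b) := by
  intro a b h
  induction h with
  | rel a b h => exact EqvGen.rel _ _ (hf _ _ h)
  | refl a => exact EqvGen.refl _
  | symm a b _ ih => exact EqvGen.symm _ _ ih
  | trans a b c _ _ ih₁ ih₂ => exact EqvGen.trans _ _ _ ih₁ ih₂

theorem glueRel_add (S : PanelStructure X k) {G : Type*} [AddGroup G] (lam : Fin k → G)
    (g : G) (a b : X × G) (h : glueRel S lam a b) :
    glueRel S lam (a.1, g + a.2) (b.1, g + b.2) := by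
  obtain ⟨i, h₁, h₂, h₃⟩ := h
  exact ⟨i, h₁, h₂, by rw [h₃, add_assoc]⟩

/-- The natural action of `G` on the glue-back construction:
`g · [(x, g₀)] = [(x, g + g₀)]`. -/
def glueAct (S : PanelStructure X k) {G : Type*} [AddGroup G] (lam : Fin k → G) (g : G) :
    GlueBack S lam → GlueBack S lam :=
  Quotient.map (fun p => (p.1, g + p.2))
    (fun a b (hab : EqvGen (glueRel S lam) a b) =>
      show EqvGen (glueRel S lam) _ _ from
        eqvGen_map_of_map (fun p => (p.1, g + p.2)) (glueRel_add S lam g) hab)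

theorem glueAct_mk (S : PanelStructure X k) {G : Type*} [AddGroup G] (lam : Fin k → G)
    (g : G) (x : X) (g₀ : G) :
    glueAct S lam g (glueMk S lam x g₀) = glueMk S lam x (g + g₀) := rfl

theorem glueAct_zero (S : PanelStructure X k) {G : Type*} [AddGroup G] (lam : Fin k → G)
    (p : GlueBack S lam) : glueAct S lam 0 p = p := by
  induction p using Quotient.ind with
  | _ a =>
    show Quotient.mk _ (a.1, 0 + a.2) = Quotient.mk _ a
    rw [zero_add]

theorem glueAct_add (S : PanelStructure X k) {G : Type*} [AddGroup G] (lam : Fin k → G)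
    (g h : G) (p : GlueBack S lam) :
    glueAct S lam (g + h) p = glueAct S lam g (glueAct S lam h p) := by
  induction p using Quotient.ind with
  | _ a =>
    show Quotient.mk _ (a.1, (g + h) + a.2) = Quotient.mk _ (a.1, g + (h + a.2))
    rw [add_assoc]

/-- Iterated application of the involutions:
`τ_{i_s}^{ε_s} ∘ ⋯ ∘ τ_{i_1}^{ε_1}` with the indices taken in increasing order. -/
def applyPanels (S : PanelStructure X k) (ε : Fin k → Bool) (x : X) : X :=
  (List.finRange k).foldl (fun y i => if ε i then S.τ i y else y) x

/-! The `g`-translate of `[(x, g₀)]` equals `[(x, g₀)]` exactly when `(x, g₀)` and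
`(x, g + g₀)` lie in the same class, so the theorem is a description of the classes.
Since every `λ i` has order two, the gluing relation is symmetric, so a class is reached
by chains of gluing steps. Because the involutions of the panels through a point commute
and preserve the other panels through it, any such chain starting at `(x, h)` can be
reordered into one applying each `τ i` at most once, in increasing order of `i`: the class
of `(x, h)` consists of the points `(applyPanels S ε x, h + ∑_{ε i = true} λ i)` with `ε`
supported on `I(x)`. -/

open Function

namespace PanelStructure

variable (S : PanelStructure X k)

theorem tau_mem_iff {i j : Fin k} {x : X} (hi : x ∈ S.P i) :
    S.τ i x ∈ S.P j ↔ x ∈ S.P j :=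
  ⟨fun h => S.invol i x hi ▸ (S.interMapsTo i j ⟨S.mapsTo i hi, h⟩).2,
    fun h => (S.interMapsTo i j ⟨hi, h⟩).2⟩

def applyPanelsList (ε : Fin k → Bool) (l : List (Fin k)) (x : X) : X :=
  l.foldl (fun y i => if ε i then S.τ i y else y) x

theorem applyPanels_eq_applyPanelsList (ε : Fin k → Bool) (x : X) :
    applyPanels S ε x = S.applyPanelsList ε (List.finRange k) x :=
  rfl

variable {S}

@[simp]
theorem applyPanelsList_nil (ε : Fin k → Bool) (x : X) : S.applyPanelsList ε [] x = x :=
  rfl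

@[simp]
theorem applyPanelsList_cons (ε : Fin k → Bool) (i : Fin k) (l : List (Fin k)) (x : X) :
    S.applyPanelsList ε (i :: l) x = S.applyPanelsList ε l (if ε i then S.τ i x else x) :=
  rfl

theorem applyPanelsList_congr {ε ε' : Fin k → Bool} {l : List (Fin k)}
    (h : ∀ i ∈ l, ε i = ε' i) (x : X) :
    S.applyPanelsList ε l x = S.applyPanelsList ε' l x :=
  List.foldl_ext _ _ _ fun y i hi => by rw [h i hi]

theorem applyPanels_false (x : X) : applyPanels S (fun _ => false) x = x := by
  rw [applyPanels_eq_applyPanelsList]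
  induction List.finRange k generalizing x with
  | nil => rfl
  | cons i l ih => exact ih x

theorem ite_tau_mem_iff {ε : Fin k → Bool} {i j : Fin k} {x : X}
    (hi : ε i = true → x ∈ S.P i) :
    (if ε i then S.τ i x else x) ∈ S.P j ↔ x ∈ S.P j := by
  split_ifs with h
  exacts [S.tau_mem_iff (hi h), Iff.rfl]

theorem applyPanelsList_tau {ε : Fin k → Bool} {l : List (Fin k)} (hl : l.Nodup) {i : Fin k}
    (hil : i ∈ l) {x : X} (hε : ∀ j, ε j = true → x ∈ S.P j) (hi : x ∈ S.P i) :
    S.applyPanelsList ε l (S.τ i x) = S.applyPanelsList (update ε i (!ε i)) l x := by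
  induction l generalizing x with
  | nil => cases hil
  | cons j t ih =>
    obtain ⟨hjt, ht⟩ := List.nodup_cons.1 hl
    rcases eq_or_ne j i with rfl | hji
    · have hagree : ∀ a ∈ t, ε a = update ε j (!ε j) a := fun a ha =>
        (update_of_ne (ne_of_mem_of_not_mem ha hjt) _ _).symm
      cases hεj : ε j <;>
        simp [hεj, S.invol j x hi, applyPanelsList_congr hagree]
    · have hit : i ∈ t := (List.mem_cons.1 hil).resolve_left hji.symm
      rw [applyPanelsList_cons, applyPanelsList_cons, update_of_ne hji,
        ← ih ht hit (fun a ha => (ite_tau_mem_iff (hε j)).2 (hε a ha))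
          ((ite_tau_mem_iff (hε j)).2 hi)]
      congr 1
      split_ifs with h
      exacts [S.comm j i x ⟨hε j h, hi⟩, rfl]

theorem applyPanels_tau {ε : Fin k → Bool} {i : Fin k} {x : X}
    (hε : ∀ j, ε j = true → x ∈ S.P j) (hi : x ∈ S.P i) :
    applyPanels S ε (S.τ i x) = applyPanels S (update ε i (!ε i)) x :=
  applyPanelsList_tau (List.nodup_finRange k) (List.mem_finRange i) hε hi

end PanelStructure

open PanelStructure

theorem sum_ite_update_not {ι G : Type*} [Fintype ι] [DecidableEq ι] [AddCommGroup G]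
    {lam : ι → G} {i : ι} (hi : lam i + lam i = 0) (ε : ι → Bool) :
    ∑ j, (if update ε i (!ε i) j then lam j else 0) =
      (∑ j, if ε j then lam j else 0) + lam i := by
  have hrest : ∑ j ∈ {i}ᶜ, (if update ε i (!ε i) j then lam j else 0) =
      ∑ j ∈ {i}ᶜ, if ε j then lam j else 0 :=
    Finset.sum_congr rfl fun j hj => by rw [update_of_ne (by simpa using hj)]
  rw [Fintype.sum_eq_add_sum_compl i, Fintype.sum_eq_add_sum_compl i, hrest, update_self,
    add_right_comm]
  cases ε i <;> simp [hi]

section Gluing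

variable {G : Type*} (S : PanelStructure X k)

theorem glueRel_symm [AddGroup G] {lam : Fin k → G} (hlam : ∀ i, lam i + lam i = 0)
    {p q : X × G} (h : glueRel S lam p q) : glueRel S lam q p := by
  obtain ⟨i, hi, h₁, h₂⟩ := h
  exact ⟨i, h₁ ▸ S.mapsTo i hi, by rw [h₁, S.invol i _ hi],
    by rw [h₂, add_assoc, hlam, add_zero]⟩

theorem eqvGen_glueRel_applyPanelsList [AddGroup G] (lam : Fin k → G) (ε : Fin k → Bool)
    (l : List (Fin k)) {x : X} (hε : ∀ i, ε i = true → x ∈ S.P i) (h : G) :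
    EqvGen (glueRel S lam) (x, h)
      (S.applyPanelsList ε l x, h + (l.map fun i => if ε i then lam i else 0).sum) := by
  induction l generalizing x h with
  | nil => simpa using EqvGen.refl (x, h)
  | cons j t ih =>
    have hstep : EqvGen (glueRel S lam) (x, h)
        (if ε j then S.τ j x else x, h + if ε j then lam j else 0) := by
      cases hεj : ε j
      · simpa using EqvGen.refl (x, h)
      · exact EqvGen.rel _ _ ⟨j, hε j hεj, by simp, by simp⟩
    simpa [add_assoc] using hstep.trans _ _ _
      (ih (fun a ha => (ite_tau_mem_iff (hε j)).2 (hε a ha)) _)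

theorem exists_of_reflTransGen_glueRel [AddCommGroup G] {lam : Fin k → G}
    (hlam : ∀ i, lam i + lam i = 0) {p q : X × G} (hpq : ReflTransGen (glueRel S lam) p q) :
    ∃ ε : Fin k → Bool, (∀ i, ε i = true → p.1 ∈ S.P i) ∧
      q = (applyPanels S ε p.1, p.2 + ∑ i, if ε i then lam i else 0) := by
  induction hpq using ReflTransGen.head_induction_on with
  | refl => exact ⟨fun _ => false, by simp, by simp [applyPanels_false]⟩
  | head hab _ ih =>
    obtain ⟨i, hi, h₁, h₂⟩ := hab
    obtain ⟨ε, hε, rfl⟩ := ih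
    have hε' : ∀ j, ε j = true → _ ∈ S.P j := fun j hj => (S.tau_mem_iff hi).1 (h₁ ▸ hε j hj)
    refine ⟨update ε i (!ε i), fun j hj => ?_, ?_⟩
    · rcases eq_or_ne j i with rfl | hji
      exacts [hi, hε' j (by simpa [update_of_ne hji] using hj)]
    · rw [h₁, h₂, applyPanels_tau hε' hi, sum_ite_update_not (hlam i), add_comm (∑ _, _),
        add_assoc]

theorem eqvGen_glueRel_iff [AddCommGroup G] {lam : Fin k → G} (hlam : ∀ i, lam i + lam i = 0)
    {x : X} {h : G} {q : X × G} :
    EqvGen (glueRel S lam) (x, h) q ↔ ∃ ε : Fin k → Bool, (∀ i, ε i = true → x ∈ S.P i) ∧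
      q = (applyPanels S ε x, h + ∑ i, if ε i then lam i else 0) := by
  have : Std.Symm (glueRel S lam) := ⟨fun _ _ => glueRel_symm S hlam⟩
  refine ⟨fun hq => ?_, ?_⟩
  · rw [EqvGen.eqvGen_eq_reflTransGen] at hq
    exact exists_of_reflTransGen_glueRel S hlam hq
  · rintro ⟨ε, hε, rfl⟩
    rw [Fin.sum_univ_def]
    exact eqvGen_glueRel_applyPanelsList S lam ε _ hε h

end Gluing

/-- The stabilizer of `[(x, g₀)]` under the natural `(ℤ/2)^m`-action on
`M(X, λ)` is the set of sums `ε_1·λ(i_1) + ⋯ + ε_s·λ(i_s)` over those `ε ∈ {0,1}^s`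
(indexed by the panels containing `x`) with `τ_{i_s}^{ε_s}(⋯(τ_{i_1}^{ε_1}(x))⋯) = x`. -/
theorem glueBack_stabilizer_eq (S : PanelStructure X k) (lam : Fin k → Z2 m)
    (x : X) (g₀ : Z2 m) :
    {g : Z2 m | glueAct S lam g (glueMk S lam x g₀) = glueMk S lam x g₀} =
      {g : Z2 m | ∃ ε : Fin k → Bool, (∀ i, ε i = true → x ∈ S.P i) ∧
        applyPanels S ε x = x ∧
        g = ∑ i : Fin k, (if ε i then lam i else 0)} := by
  have hlam : ∀ i, lam i + lam i = 0 := fun i => by ext j; exact CharTwo.add_self_eq_zero _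
  ext g
  rw [Set.mem_ofPred_eq, glueAct_mk, eq_comm, Quotient.eq, Set.mem_ofPred_eq]
  refine (eqvGen_glueRel_iff S hlam).trans (exists_congr fun ε => and_congr_right fun _ => ?_)
  rw [Prod.mk.injEq, eq_comm, add_comm g₀, add_left_inj]
end

section
/- If the involutive panel structure on X is perfect, then for every (ℤ/2)^m-coloring λ the natural (ℤ/2)^m-action on the glue-back construction M(X, λ) is free, i.e. the stabilizer of every point of M(X, λ) is trivial. -/
open Set Relation

variable {X : Type*} [TopologicalSpace X] {k m : ℕ}

/-- An involutive panel structure is *perfect* if every point lying on exactly `s`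
panels has exactly `2^s` duplicate points. -/
def IsPerfect (S : PanelStructure X k) : Prop :=
  ∀ x : X,
    {y : X | ∃ ε : Fin k → Bool, (∀ i, ε i = true → x ∈ S.P i) ∧
        y = applyPanels S ε x}.ncard
      = 2 ^ ({i : Fin k | x ∈ S.P i}.ncard)

/-!
Starting from `(x, g₀)`, every generating move of the gluing keeps us among the pairs
`(τ^ε x, g₀ + ∑_{εᵢ} λᵢ)` with `ε ⊆ I(x)`: since the involutions preserve membership in panels and
commute, applying `τᵢ` to `τ^ε x` just toggles `εᵢ`. If `g` fixes `[(x, g₀)]`, then `(x, g + g₀)` is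
such a pair, so `τ^ε x = x`. Perfectness says that `ε ↦ τ^ε x` is injective on subsets of `I(x)`,
hence `ε = ∅` and `g = 0`.
-/

namespace PanelStructure

variable (S : PanelStructure X k)

theorem mem_P_τ_iff {i j : Fin k} {x : X} (hx : x ∈ S.P i) : S.τ i x ∈ S.P j ↔ x ∈ S.P j := by
  refine ⟨fun hj => ?_, fun hj => (S.interMapsTo i j ⟨hx, hj⟩).2⟩
  -- `x = τⱼ (τᵢ (τⱼ (τᵢ x)))`, and all the intermediate points lie in `Pᵢ ∩ Pⱼ`.
  have hy : S.τ i x ∈ S.P i ∩ S.P j := ⟨S.mapsTo i hx, hj⟩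
  have hz : S.τ j (S.τ i x) ∈ S.P i ∩ S.P j := by
    simpa only [inter_comm] using S.interMapsTo j i hy.symm
  have hx_eq : S.τ j (S.τ i (S.τ j (S.τ i x))) = x := by
    rw [S.comm j i _ hz.symm, S.invol j _ hy.2, S.invol i _ hx]
  rw [← hx_eq]
  exact S.mapsTo j (S.interMapsTo i j hz).2

def IsAdmissible (x : X) (ε : Fin k → Bool) : Prop :=
  ∀ i, ε i = true → x ∈ S.P i

theorem ncard_setOf_isAdmissible (x : X) :
    {ε | S.IsAdmissible x ε}.ncard = 2 ^ {i | x ∈ S.P i}.ncard := by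
  classical
  have hset : {ε | S.IsAdmissible x ε} = (fun s i => decide (i ∈ s)) '' 𝒫 {i | x ∈ S.P i} := by
    ext ε
    refine ⟨fun hε => ⟨{i | ε i}, fun i hi => hε i hi, by simp⟩, ?_⟩
    rintro ⟨s, hs, rfl⟩ i hi
    exact hs (of_decide_eq_true hi)
  rw [hset, ncard_image_of_injective _ fun s t hst => ?_, ncard_powerset]
  ext i
  simpa using congrFun hst i

def τIf (ε : Fin k → Bool) (i : Fin k) (x : X) : X :=
  if ε i then S.τ i x else x

def applyPanelsAlong (ε : Fin k → Bool) (l : List (Fin k)) (x : X) : X :=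
  l.foldl (fun y i => S.τIf ε i y) x

variable {S} {ε : Fin k → Bool} {x : X}

theorem IsAdmissible.update {i : Fin k} (hε : S.IsAdmissible x ε) (hi : x ∈ S.P i)
    (b : Bool) : S.IsAdmissible x (Function.update ε i b) := by
  intro j hj
  by_cases hji : j = i
  · exact hji ▸ hi
  · exact hε j (by rwa [Function.update_of_ne hji] at hj)

theorem mem_P_τIf_iff (hε : S.IsAdmissible x ε) (a j : Fin k) :
    S.τIf ε a x ∈ S.P j ↔ x ∈ S.P j := by
  unfold τIf
  split_ifs with ha
  exacts [S.mem_P_τ_iff (hε a ha), Iff.rfl]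

theorem IsAdmissible.τIf (hε : S.IsAdmissible x ε) (a : Fin k) :
    S.IsAdmissible (S.τIf ε a x) ε :=
  fun j hj => (mem_P_τIf_iff hε a j).2 (hε j hj)

theorem τ_τIf_comm {i : Fin k} (hε : S.IsAdmissible x ε) (hi : x ∈ S.P i) (a : Fin k) :
    S.τ i (S.τIf ε a x) = S.τIf ε a (S.τ i x) := by
  unfold τIf
  split_ifs with ha
  exacts [S.comm i a x ⟨hi, hε a ha⟩, rfl]

theorem τ_τIf_self {i : Fin k} (hi : x ∈ S.P i) :
    S.τ i (S.τIf ε i x) = S.τIf (Function.update ε i (!ε i)) i x := by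
  unfold τIf
  cases ε i <;> simp [S.invol i x hi]

theorem mem_P_applyPanelsAlong_iff (l : List (Fin k)) (hε : S.IsAdmissible x ε) (j : Fin k) :
    S.applyPanelsAlong ε l x ∈ S.P j ↔ x ∈ S.P j := by
  induction l generalizing x with
  | nil => rfl
  | cons a l ih =>
    exact (ih (hε.τIf a)).trans (mem_P_τIf_iff hε a j)

theorem τ_applyPanelsAlong_comm {i : Fin k} (l : List (Fin k)) (hε : S.IsAdmissible x ε)
    (hi : x ∈ S.P i) : S.τ i (S.applyPanelsAlong ε l x) = S.applyPanelsAlong ε l (S.τ i x) := by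
  induction l generalizing x with
  | nil => rfl
  | cons a l ih =>
    change S.τ i (S.applyPanelsAlong ε l (S.τIf ε a x))
      = S.applyPanelsAlong ε l (S.τIf ε a (S.τ i x))
    rw [ih (hε.τIf a) ((mem_P_τIf_iff hε a i).2 hi), τ_τIf_comm hε hi]

theorem applyPanelsAlong_congr {ε' : Fin k → Bool} {l : List (Fin k)}
    (h : ∀ i ∈ l, ε i = ε' i) : S.applyPanelsAlong ε l x = S.applyPanelsAlong ε' l x :=
  List.foldl_ext _ _ _ fun y i hi => by simp only [τIf, h i hi]

theorem τ_applyPanelsAlong {i : Fin k} {l : List (Fin k)} (hl : l.Nodup) (hil : i ∈ l)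
    (hε : S.IsAdmissible x ε) (hi : x ∈ S.P i) :
    S.τ i (S.applyPanelsAlong ε l x) = S.applyPanelsAlong (Function.update ε i (!ε i)) l x := by
  induction l generalizing x with
  | nil => simp at hil
  | cons a l ih =>
    change S.τ i (S.applyPanelsAlong ε l (S.τIf ε a x))
      = S.applyPanelsAlong (Function.update ε i (!ε i)) l (S.τIf (Function.update ε i (!ε i)) a x)
    obtain ⟨hal, hl⟩ := List.nodup_cons.1 hl
    by_cases hai : a = i
    · subst hai
      rw [τ_applyPanelsAlong_comm l (hε.τIf a) ((mem_P_τIf_iff hε a a).2 hi), τ_τIf_self hi]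
      exact applyPanelsAlong_congr fun j hj =>
        (Function.update_of_ne (ne_of_mem_of_not_mem hj hal) _ ε).symm
    · have hτIf : S.τIf (Function.update ε i (!ε i)) a x = S.τIf ε a x := by
        simp only [τIf, Function.update_of_ne hai]
      rw [hτIf]
      exact ih hl ((List.mem_cons.1 hil).resolve_left (Ne.symm hai)) (hε.τIf a)
        ((mem_P_τIf_iff hε a i).2 hi)

theorem applyPanelsAlong_false (l : List (Fin k)) (x : X) :
    S.applyPanelsAlong (fun _ => false) l x = x := by
  simp [applyPanelsAlong, τIf]

end PanelStructure

open PanelStructure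

section Perfect

variable {S : PanelStructure X k} {ε : Fin k → Bool} {x : X}

theorem IsPerfect.injOn_applyPanels (hS : IsPerfect S) (x : X) :
    InjOn (fun ε => applyPanels S ε x) {ε | S.IsAdmissible x ε} := by
  refine injOn_of_ncard_image_eq ?_
  rw [ncard_setOf_isAdmissible, ← hS x]
  congr 1
  ext y
  exact ⟨fun ⟨ε, hε, hy⟩ => ⟨ε, hε, hy.symm⟩, fun ⟨ε, hε, hy⟩ => ⟨ε, hε, hy.symm⟩⟩

theorem IsPerfect.eq_false_of_applyPanels_eq_self (hS : IsPerfect S) (hε : S.IsAdmissible x ε)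
    (h : applyPanels S ε x = x) : ε = fun _ => false :=
  hS.injOn_applyPanels x hε (fun _ hi => absurd hi Bool.false_ne_true)
    (h.trans (applyPanelsAlong_false _ x).symm)

end Perfect

theorem Z2.add_self (a : Z2 m) : a + a = 0 :=
  funext fun i => CharTwo.add_self_eq_zero (a i)

def colorSum (lam : Fin k → Z2 m) (ε : Fin k → Bool) : Z2 m :=
  ∑ i, if ε i then lam i else 0

theorem colorSum_update_not (lam : Fin k → Z2 m) (ε : Fin k → Bool) (i : Fin k) :
    colorSum lam (Function.update ε i (!ε i)) = colorSum lam ε + lam i := by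
  classical
  have hrest : ∀ j ∈ ({i}ᶜ : Finset (Fin k)),
      (if Function.update ε i (!ε i) j then lam j else 0) = if ε j then lam j else 0 := by
    intro j hj
    rw [Function.update_of_ne (by simpa using hj)]
  simp only [colorSum, Fintype.sum_eq_add_sum_compl i, Function.update_self,
    Finset.sum_congr rfl hrest]
  cases ε i
  · simp [add_comm]
  · simp only [Bool.not_true, Bool.false_eq_true, if_false, if_true, zero_add]
    rw [add_right_comm, Z2.add_self, zero_add]

section Duplicates

variable {S : PanelStructure X k} {lam : Fin k → Z2 m}

theorem glueRel_symm_s3 {p q : X × Z2 m} (h : glueRel S lam p q) : glueRel S lam q p := by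
  obtain ⟨i, hi, hq₁, hq₂⟩ := h
  refine ⟨i, hq₁ ▸ S.mapsTo i hi, ?_, ?_⟩
  · rw [hq₁, S.invol i _ hi]
  · rw [hq₂, add_assoc, Z2.add_self, add_zero]

variable (S lam) in
def IsColoredDuplicate (p q : X × Z2 m) : Prop :=
  ∃ ε, S.IsAdmissible p.1 ε ∧ q.1 = applyPanels S ε p.1 ∧ q.2 = p.2 + colorSum lam ε

theorem isColoredDuplicate_refl (p : X × Z2 m) : IsColoredDuplicate S lam p p :=
  ⟨fun _ => false, fun _ h => absurd h Bool.false_ne_true,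
    (applyPanelsAlong_false _ p.1).symm, by simp [colorSum]⟩

theorem IsColoredDuplicate.of_glueRel {p q r : X × Z2 m} (hpq : IsColoredDuplicate S lam p q)
    (hqr : glueRel S lam q r) : IsColoredDuplicate S lam p r := by
  obtain ⟨ε, hε, hq₁, hq₂⟩ := hpq
  obtain ⟨i, hi, hr₁, hr₂⟩ := hqr
  have hpi : p.1 ∈ S.P i := (mem_P_applyPanelsAlong_iff _ hε i).1 (hq₁ ▸ hi)
  refine ⟨Function.update ε i (!ε i), hε.update hpi _, ?_, ?_⟩
  · rw [hr₁, hq₁]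
    exact τ_applyPanelsAlong (List.nodup_finRange k) (List.mem_finRange i) hε hpi
  · rw [hr₂, hq₂, colorSum_update_not, add_assoc]

theorem isColoredDuplicate_iff_of_eqvGen {p q r : X × Z2 m} (h : EqvGen (glueRel S lam) q r) :
    IsColoredDuplicate S lam p q ↔ IsColoredDuplicate S lam p r := by
  induction h with
  | rel q r h => exact ⟨fun hq => hq.of_glueRel h, fun hr => hr.of_glueRel (glueRel_symm_s3 h)⟩
  | refl => rfl
  | symm _ _ _ ih => exact ih.symm
  | trans _ _ _ _ _ ih₁ ih₂ => exact ih₁.trans ih₂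

end Duplicates

/-- If the involutive panel structure on `X` is perfect, then for every
`(ℤ/2)^m`-coloring `λ` the natural `(ℤ/2)^m`-action on `M(X, λ)` is free. -/
theorem glueBack_action_free_of_isPerfect (S : PanelStructure X k) (hS : IsPerfect S)
    (lam : Fin k → Z2 m) :
    ∀ (g : Z2 m) (p : GlueBack S lam), glueAct S lam g p = p → g = 0 := by
  intro g p
  induction p using Quotient.ind with
  | _ p =>
    intro hp
    obtain ⟨ε, hε, hx, hg⟩ :=
      (isColoredDuplicate_iff_of_eqvGen (Quotient.exact hp)).2 (isColoredDuplicate_refl p)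
    obtain rfl := hS.eq_false_of_applyPanels_eq_self hε hx.symm
    simpa [colorSum] using hg
end
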